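/- arXiv:2111.04663 — 2 statements merged into one kernel-verified Lean document; each statement's English description precedes it below -/
import Mathlib

section
/- Let Ξ ⊆ ℝⁿ, q ∈ [1,∞), let ξ̂₁,…,ξ̂_N ∈ Ξ, let 𝒳 ⊆ ℝᵐ, and let F, G : ℝᵐ × ℝⁿ → ℝ be q-Lipschitz in ξ with constants γ_{x,F,q} and γ_{x,G,q}. Assume that for each x ∈ 𝒳 the images F(x,Ξ) and G(x,Ξ) are intervals in ℝ. For each x ∈ 𝒳 let B^F_x (resp. B^G_x) denote the set of probability measures Q supported on the closure of F(x,Ξ) (resp. of G(x,Ξ)) with finite first moment and with 1-Wasserstein distance (cost |·|) at most ε γ_{x,F,q} from P̂^{x,F}_N (resp. at most ε γ_{x,G,q} from P̂^{x,G}_N). Then, for every ε > 0 and μ ∈ ℝ, the value inf{ sup_{Q∈B^F_x} E_{ζ∼Q}[ζ] : x ∈ 𝒳, inf_{Q∈B^G_x} E_{ζ∼Q}[ζ] ≥ μ } equals inf{ min{ (1/N) Σ_{i=1}^N F(x, ξ̂_i) + ε γ_{x,F,q}, sup_{ξ∈Ξ} F(x,ξ) } : x ∈ 𝒳, max{ (1/N)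 Σ_{i=1}^N G(x, ξ̂_i) − ε γ_{x,G,q}, inf_{ξ∈Ξ} G(x,ξ) } ≥ μ } (both values taken in the extended reals). -/
open MeasureTheory
open scoped ENNReal

/-- The `p`-th power transport cost of a coupling `π` with ground cost `d`. -/
noncomputable def transportCost {α : Type*} [MeasurableSpace α]
    (p : ℝ) (d : α → α → ℝ) (π : Measure (α × α)) : ℝ≥0∞ :=
  ∫⁻ w, ENNReal.ofReal (d w.1 w.2 ^ p) ∂π

/-- The `p`-Wasserstein distance between `μ` and `ν` with ground cost `d`:
the infimum of the `p`-th root of the transport cost over all couplings. -/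
noncomputable def wassersteinDist {α : Type*} [MeasurableSpace α]
    (p : ℝ) (d : α → α → ℝ) (μ ν : Measure α) : ℝ≥0∞ :=
  (⨅ (π : Measure (α × α)) (_ : IsProbabilityMeasure π ∧
      π.map Prod.fst = μ ∧ π.map Prod.snd = ν), transportCost p d π) ^ (1 / p)

/-- The empirical distribution of the points `ξ 1, …, ξ N`. -/
noncomputable def empMeasure {α : Type*} [MeasurableSpace α] {N : ℕ}
    (ξ : Fin N → α) : Measure α :=
  (N : ℝ≥0∞)⁻¹ • ∑ i, Measure.dirac (ξ i)

/-- The `q`-norm on `ℝⁿ`. -/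
noncomputable def qnorm (q : ℝ) {n : ℕ} (v : Fin n → ℝ) : ℝ :=
  (∑ i, |v i| ^ q) ^ (1 / q)

/-- Probability measures on `ℝ` supported on `S`, with finite `p`-th moment, within
`p`-Wasserstein distance (with cost `|·|`) `ε` of `ν`. -/
def realWassersteinBall (p : ℝ) (S : Set ℝ) (ν : Measure ℝ) (ε : ℝ) : Set (Measure ℝ) :=
  {Q | IsProbabilityMeasure Q ∧ Q Sᶜ = 0 ∧
    (∫⁻ t, ENNReal.ofReal (|t| ^ p) ∂Q) < ⊤ ∧
    wassersteinDist p (fun a b => |a - b|) Q ν ≤ ENNReal.ofReal ε}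

/-! For `p = 1` on the line, the mean of `Q` differs from that of the empirical measure by at most
the transport cost, so every `Q` in the ball has mean within `ε` of the empirical mean `m`, and,
being supported on `closure T`, mean at most `sup T` (at least `inf T`). Conversely, moving every
sample point a common fraction `t` of the way towards a point `s ∈ T` lying above (below) all
samples keeps the points in the interval `T` and costs exactly the shift `t (s - m)` of the mean;
choosing `t` well realises the mean `min (m + ε) s` (`max (m - ε) s`). Letting `s` run over `T`
gives the worst-case means, and the two optimisation problems agree pointwise in `x`. -/

section empMeasure

variable {α : Type*} [MeasurableSpace α] {N : ℕ}

lemma isProbabilityMeasure_empMeasure (hN : 0 < N) (b : Fin N → α) :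
    IsProbabilityMeasure (empMeasure b) := by
  constructor
  simp only [empMeasure, Measure.smul_apply, Measure.coe_finsetSum, Finset.sum_apply,
    measure_univ, Finset.sum_const, Finset.card_univ, Fintype.card_fin, nsmul_eq_mul, mul_one,
    smul_eq_mul]
  exact ENNReal.inv_mul_cancel (by exact_mod_cast hN.ne') (by simp)

lemma lintegral_empMeasure [MeasurableSingletonClass α] (f : α → ℝ≥0∞) (b : Fin N → α) :
    ∫⁻ x, f x ∂empMeasure b = (N : ℝ≥0∞)⁻¹ * ∑ i, f (b i) := by
  simp [empMeasure, lintegral_smul_measure, lintegral_dirac]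

lemma integrable_empMeasure [MeasurableSingletonClass α] (hN : 0 < N) (f : α → ℝ)
    (b : Fin N → α) : Integrable f (empMeasure b) :=
  (integrable_finsetSum_measure.2 fun _ _ => integrable_dirac enorm_lt_top).smul_measure
    (by simp [hN.ne'])

lemma integral_empMeasure [MeasurableSingletonClass α] (f : α → ℝ) (b : Fin N → α) :
    ∫ x, f x ∂empMeasure b = 1 / (N : ℝ) * ∑ i, f (b i) := by
  rw [empMeasure, integral_smul_measure,
    integral_finsetSum_measure fun _ _ => integrable_dirac enorm_lt_top]
  simp only [ENNReal.toReal_inv, ENNReal.toReal_natCast, integral_dirac, smul_eq_mul, one_div]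

lemma map_empMeasure {β : Type*} [MeasurableSpace β] {g : α → β} (hg : Measurable g)
    (b : Fin N → α) : (empMeasure b).map g = empMeasure (g ∘ b) := by
  simp only [empMeasure, Measure.map_smul, Measure.map_finset_sum hg.aemeasurable,
    Measure.map_dirac' hg, Function.comp_apply]

lemma empMeasure_apply_eq_zero {s : Set α} (hs : MeasurableSet s) {b : Fin N → α}
    (hb : ∀ i, b i ∉ s) : empMeasure b s = 0 := by
  simp [empMeasure, Measure.dirac_apply' _ hs, hb]

end empMeasure

section realWassersteinBall

variable {N : ℕ}

lemma wassersteinDist_empMeasure_le (hN : 0 < N) (b a : Fin N → ℝ) :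
    wassersteinDist 1 (fun x y => |x - y|) (empMeasure b) (empMeasure a)
      ≤ ENNReal.ofReal (1 / (N : ℝ) * ∑ i, |b i - a i|) := by
  have hcoupling := isProbabilityMeasure_empMeasure hN fun i => (b i, a i)
  rw [wassersteinDist, div_one, ENNReal.rpow_one]
  refine iInf₂_le_of_le _ ⟨hcoupling, map_empMeasure measurable_fst _,
    map_empMeasure measurable_snd _⟩ (le_of_eq ?_)
  rw [transportCost, lintegral_empMeasure, ENNReal.ofReal_mul (by positivity),
    ENNReal.ofReal_sum_of_nonneg fun i _ => abs_nonneg _, one_div,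
    ENNReal.ofReal_inv_of_pos (by exact_mod_cast hN), ENNReal.ofReal_natCast]
  simp

lemma empMeasure_mem_realWassersteinBall (hN : 0 < N) {S : Set ℝ} (hS : MeasurableSet S)
    {b : Fin N → ℝ} (hb : ∀ i, b i ∈ S) (a : Fin N → ℝ) {ε : ℝ}
    (hcost : 1 / (N : ℝ) * ∑ i, |b i - a i| ≤ ε) :
    empMeasure b ∈ realWassersteinBall 1 S (empMeasure a) ε :=
  ⟨isProbabilityMeasure_empMeasure hN b,
    empMeasure_apply_eq_zero hS.compl fun i => not_not.2 (hb i),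
    by rw [lintegral_empMeasure]; exact ENNReal.mul_lt_top (by simp [hN]) (by simp),
    (wassersteinDist_empMeasure_le hN b a).trans (ENNReal.ofReal_le_ofReal hcost)⟩

lemma ofReal_abs_integral_sub_le_wassersteinDist {Q ν : Measure ℝ}
    (hQ : Integrable (fun t => t) Q) (hν : Integrable (fun t => t) ν) :
    ENNReal.ofReal |∫ t, t ∂Q - ∫ t, t ∂ν| ≤ wassersteinDist 1 (fun x y => |x - y|) Q ν := by
  rw [wassersteinDist, div_one, ENNReal.rpow_one]
  refine le_iInf₂ fun π ⟨_, hfst, hsnd⟩ => ?_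
  subst hfst hsnd
  have hint_fst : Integrable (fun w : ℝ × ℝ => w.1) π :=
    (integrable_map_measure hQ.aestronglyMeasurable measurable_fst.aemeasurable).1 hQ
  have hint_snd : Integrable (fun w : ℝ × ℝ => w.2) π :=
    (integrable_map_measure hν.aestronglyMeasurable measurable_snd.aemeasurable).1 hν
  calc ENNReal.ofReal |∫ t, t ∂π.map Prod.fst - ∫ t, t ∂π.map Prod.snd|
      = ‖∫ w, (w.1 - w.2) ∂π‖ₑ := by
        rw [integral_map (f := fun t => t) measurable_fst.aemeasurable aestronglyMeasurable_id,
          integral_map (f := fun t => t) measurable_snd.aemeasurable aestronglyMeasurable_id,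
          integral_sub hint_fst hint_snd, Real.enorm_eq_ofReal_abs]
    _ ≤ ∫⁻ w, ‖w.1 - w.2‖ₑ ∂π := enorm_integral_le_lintegral_enorm _
    _ = transportCost 1 (fun x y => |x - y|) π := by
        simp [transportCost, Real.enorm_eq_ofReal_abs]

variable {S : Set ℝ} {ν : Measure ℝ} {ε : ℝ} {Q : Measure ℝ}

lemma integrable_of_mem_realWassersteinBall (hQ : Q ∈ realWassersteinBall 1 S ν ε) :
    Integrable (fun t => t) Q :=
  ⟨aestronglyMeasurable_id, by
    simpa [HasFiniteIntegral, Real.enorm_eq_ofReal_abs] using hQ.2.2.1⟩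

lemma abs_integral_sub_le_of_mem_realWassersteinBall (hν : Integrable (fun t => t) ν)
    (hε : 0 ≤ ε) (hQ : Q ∈ realWassersteinBall 1 S ν ε) :
    |∫ t, t ∂Q - ∫ t, t ∂ν| ≤ ε :=
  (ENNReal.ofReal_le_ofReal_iff hε).1 <| .trans
    (ofReal_abs_integral_sub_le_wassersteinDist (integrable_of_mem_realWassersteinBall hQ) hν)
    hQ.2.2.2

lemma integral_le_of_mem_realWassersteinBall {r : ℝ} (hS : S ⊆ Set.Iic r)
    (hQ : Q ∈ realWassersteinBall 1 S ν ε) : ∫ t, t ∂Q ≤ r := by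
  have : IsProbabilityMeasure Q := hQ.1
  have hae : ∀ᵐ t ∂Q, t ≤ r := measure_mono_null (fun t ht hS' => ht (hS hS')) hQ.2.1
  simpa using integral_mono_ae (integrable_of_mem_realWassersteinBall hQ) (integrable_const r) hae

lemma le_integral_of_mem_realWassersteinBall {r : ℝ} (hS : S ⊆ Set.Ici r)
    (hQ : Q ∈ realWassersteinBall 1 S ν ε) : r ≤ ∫ t, t ∂Q := by
  have : IsProbabilityMeasure Q := hQ.1
  have hae : ∀ᵐ t ∂Q, r ≤ t := measure_mono_null (fun t ht hS' => ht (hS hS')) hQ.2.1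
  simpa using integral_mono_ae (integrable_const r) (integrable_of_mem_realWassersteinBall hQ) hae

lemma integral_le_sSup_of_mem_realWassersteinBall {T : Set ℝ}
    (hQ : Q ∈ realWassersteinBall 1 (closure T) ν ε) :
    ((∫ t, t ∂Q : ℝ) : EReal) ≤ sSup (Real.toEReal '' T) := by
  by_contra! h
  obtain ⟨r, hr, hrQ⟩ := EReal.lt_iff_exists_real_btwn.1 h
  have hT : closure T ⊆ Set.Iic r := isClosed_Iic.closure_subset_iff.2 fun t ht =>
    EReal.coe_le_coe_iff.1 ((le_sSup (Set.mem_image_of_mem _ ht)).trans hr.le)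
  exact (EReal.coe_lt_coe_iff.1 hrQ).not_ge (integral_le_of_mem_realWassersteinBall hT hQ)

lemma sInf_le_integral_of_mem_realWassersteinBall {T : Set ℝ}
    (hQ : Q ∈ realWassersteinBall 1 (closure T) ν ε) :
    sInf (Real.toEReal '' T) ≤ ((∫ t, t ∂Q : ℝ) : EReal) := by
  by_contra! h
  obtain ⟨r, hQr, hr⟩ := EReal.lt_iff_exists_real_btwn.1 h
  have hT : closure T ⊆ Set.Ici r := isClosed_Ici.closure_subset_iff.2 fun t ht =>
    EReal.coe_le_coe_iff.1 (hr.le.trans (sInf_le (Set.mem_image_of_mem _ ht)))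
  exact (EReal.coe_lt_coe_iff.1 hQr).not_ge (le_integral_of_mem_realWassersteinBall hT hQ)

end realWassersteinBall

section worstCaseMean

variable {N : ℕ} {T : Set ℝ} {a : Fin N → ℝ} {s ε : ℝ}

lemma avg_const (hN : 0 < N) (x : ℝ) : 1 / (N : ℝ) * ∑ _i : Fin N, x = x := by
  simp [Finset.sum_const, hN.ne']

lemma avg_add_mul_sub (hN : 0 < N) (a : Fin N → ℝ) (s t : ℝ) :
    1 / (N : ℝ) * ∑ i, (a i + t * (s - a i))
      = 1 / (N : ℝ) * ∑ i, a i + t * (s - 1 / (N : ℝ) * ∑ i, a i) := by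
  have hN' : (N : ℝ) ≠ 0 := by exact_mod_cast hN.ne'
  rw [Finset.sum_add_distrib, ← Finset.mul_sum, Finset.sum_sub_distrib, Finset.sum_const,
    Finset.card_univ, Fintype.card_fin, nsmul_eq_mul]
  field_simp

lemma exists_avg_abs_sub_le_avg_eq_min (hN : 0 < N) (hT : T.OrdConnected) (ha : ∀ i, a i ∈ T)
    (hs : s ∈ T) (has : ∀ i, a i ≤ s) (hε : 0 ≤ ε) :
    ∃ b : Fin N → ℝ, (∀ i, b i ∈ T) ∧ 1 / (N : ℝ) * ∑ i, |b i - a i| ≤ ε ∧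
      1 / (N : ℝ) * ∑ i, b i = min (1 / (N : ℝ) * ∑ i, a i + ε) s := by
  set m := 1 / (N : ℝ) * ∑ i, a i
  have hms : m ≤ s := (mul_le_mul_of_nonneg_left (Finset.sum_le_sum fun i _ => has i)
    (by positivity)).trans_eq (avg_const hN s)
  -- each point moves the fraction `t` of its distance to `s`: cost and mean shift are `t * (s - m)`
  set t := min 1 (ε / (s - m))
  have ht0 : 0 ≤ t := le_min zero_le_one (div_nonneg hε (sub_nonneg.2 hms))
  have ht1 : t ≤ 1 := min_le_left _ _
  have hshift : t * (s - m) = min (s - m) ε := by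
    rcases hms.eq_or_lt with h | h
    · simp [← h, hε]
    · rw [min_mul_of_nonneg _ _ (sub_nonneg.2 hms), one_mul, div_mul_cancel₀ _ (sub_pos.2 h).ne']
  have hmean := avg_add_mul_sub hN a s t
  refine ⟨fun i => a i + t * (s - a i), fun i => hT.out (ha i) hs ⟨?_, ?_⟩, ?_, ?_⟩
  · nlinarith [has i]
  · nlinarith [has i]
  · have habs : ∀ i, |a i + t * (s - a i) - a i| = a i + t * (s - a i) - a i := fun i =>
      abs_of_nonneg (by nlinarith [has i])
    rw [Finset.sum_congr rfl fun i _ => habs i, Finset.sum_sub_distrib, mul_sub, hmean]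
    linarith [min_le_right (s - m) ε]
  · rw [hmean, hshift, ← min_add_add_left, add_sub_cancel, min_comm]

lemma exists_avg_abs_sub_le_avg_eq_max (hN : 0 < N) (hT : T.OrdConnected) (ha : ∀ i, a i ∈ T)
    (hs : s ∈ T) (hsa : ∀ i, s ≤ a i) (hε : 0 ≤ ε) :
    ∃ b : Fin N → ℝ, (∀ i, b i ∈ T) ∧ 1 / (N : ℝ) * ∑ i, |b i - a i| ≤ ε ∧
      1 / (N : ℝ) * ∑ i, b i = max (1 / (N : ℝ) * ∑ i, a i - ε) s := by
  obtain ⟨b, hbT, hcost, hmean⟩ := exists_avg_abs_sub_le_avg_eq_min hN (T := -T)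
    (hT.preimage_anti fun _ _ => neg_le_neg) (a := -a) (by simpa) (s := -s) (by simpa)
    (by simpa) hε
  refine ⟨-b, by simpa using hbT, ?_, ?_⟩
  · simpa [abs_sub_comm, neg_add_eq_sub, add_comm] using hcost
  · simp only [Pi.neg_apply, Finset.sum_neg_distrib, mul_neg] at hmean ⊢
    rw [hmean, ← max_neg_neg, neg_neg, neg_add, neg_neg, sub_eq_add_neg]

lemma sSup_integral_image_realWassersteinBall (hN : 0 < N) (hT : T.OrdConnected)
    (ha : ∀ i, a i ∈ T) (hε : 0 ≤ ε) :
    sSup ((fun Q : Measure ℝ => ((∫ t, t ∂Q : ℝ) : EReal)) ''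
      realWassersteinBall 1 (closure T) (empMeasure a) ε)
      = min ((1 / (N : ℝ) * ∑ i, a i + ε : ℝ) : EReal) (sSup (Real.toEReal '' T)) := by
  apply le_antisymm
  · refine sSup_le ?_
    rintro _ ⟨Q, hQ, rfl⟩
    refine le_min (EReal.coe_le_coe_iff.2 ?_) (integral_le_sSup_of_mem_realWassersteinBall hQ)
    have := abs_integral_sub_le_of_mem_realWassersteinBall (integrable_empMeasure hN _ a) hε hQ
    rw [integral_empMeasure] at this
    linarith [(abs_le.1 this).2]
  · rw [inf_sSup_eq]
    refine iSup₂_le ?_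
    rintro _ ⟨s, hs, rfl⟩
    have : Nonempty (Fin N) := ⟨⟨0, hN⟩⟩
    obtain ⟨i₀, hi₀⟩ := Finite.exists_max a
    obtain ⟨b, hbT, hcost, hmean⟩ :=
      exists_avg_abs_sub_le_avg_eq_min hN hT ha (max_rec' (· ∈ T) hs (ha i₀))
        (fun i => (hi₀ i).trans (le_max_right _ _)) hε
    calc _ ≤ ((min (1 / (N : ℝ) * ∑ i, a i + ε) (max s (a i₀)) : ℝ) : EReal) := by
          rw [EReal.coe_strictMono.monotone.map_min]
          exact min_le_min le_rfl (EReal.coe_le_coe_iff.2 (le_max_left _ _))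
      _ = ((∫ t, t ∂empMeasure b : ℝ) : EReal) := by rw [integral_empMeasure, hmean]
      _ ≤ _ := le_sSup <|
          Set.mem_image_of_mem (fun Q : Measure ℝ => ((∫ t, t ∂Q : ℝ) : EReal)) <|
          empMeasure_mem_realWassersteinBall hN isClosed_closure.measurableSet
            (fun i => subset_closure (hbT i)) a hcost

lemma sInf_integral_image_realWassersteinBall (hN : 0 < N) (hT : T.OrdConnected)
    (ha : ∀ i, a i ∈ T) (hε : 0 ≤ ε) :
    sInf ((fun Q : Measure ℝ => ((∫ t, t ∂Q : ℝ) : EReal)) ''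
      realWassersteinBall 1 (closure T) (empMeasure a) ε)
      = max ((1 / (N : ℝ) * ∑ i, a i - ε : ℝ) : EReal) (sInf (Real.toEReal '' T)) := by
  apply le_antisymm
  · rw [sup_sInf_eq]
    refine le_iInf₂ ?_
    rintro _ ⟨s, hs, rfl⟩
    have : Nonempty (Fin N) := ⟨⟨0, hN⟩⟩
    obtain ⟨i₀, hi₀⟩ := Finite.exists_min a
    obtain ⟨b, hbT, hcost, hmean⟩ :=
      exists_avg_abs_sub_le_avg_eq_max hN hT ha (min_rec' (· ∈ T) hs (ha i₀))
        (fun i => (min_le_right _ _).trans (hi₀ i)) hε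
    calc _ ≤ ((∫ t, t ∂empMeasure b : ℝ) : EReal) := sInf_le <|
          Set.mem_image_of_mem (fun Q : Measure ℝ => ((∫ t, t ∂Q : ℝ) : EReal)) <|
          empMeasure_mem_realWassersteinBall hN isClosed_closure.measurableSet
            (fun i => subset_closure (hbT i)) a hcost
      _ = ((max (1 / (N : ℝ) * ∑ i, a i - ε) (min s (a i₀)) : ℝ) : EReal) := by
          rw [integral_empMeasure, hmean]
      _ ≤ _ := by
          rw [EReal.coe_strictMono.monotone.map_max]
          exact max_le_max le_rfl (EReal.coe_le_coe_iff.2 (min_le_left _ _))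
  · refine le_sInf ?_
    rintro _ ⟨Q, hQ, rfl⟩
    refine max_le (EReal.coe_le_coe_iff.2 ?_) (sInf_le_integral_of_mem_realWassersteinBall hQ)
    have := abs_integral_sub_le_of_mem_realWassersteinBall (integrable_empMeasure hN _ a) hε hQ
    rw [integral_empMeasure] at this
    linarith [(abs_le.1 this).1]

end worstCaseMean

theorem statement2_general {n m N : ℕ} (hN : 0 < N)
    (Ξ : Set (Fin n → ℝ))
    (ξh : Fin N → Fin n → ℝ) (hξh : ∀ i, ξh i ∈ Ξ)
    (𝒳 : Set (Fin m → ℝ))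
    (F G : (Fin m → ℝ) → (Fin n → ℝ) → ℝ) (γF γG : (Fin m → ℝ) → ℝ)
    (hγF : ∀ x ∈ 𝒳, 0 < γF x) (hγG : ∀ x ∈ 𝒳, 0 < γG x)
    (hFint : ∀ x ∈ 𝒳, (F x '' Ξ).OrdConnected)
    (hGint : ∀ x ∈ 𝒳, (G x '' Ξ).OrdConnected)
    (ε : ℝ) (hε : 0 < ε) (μ : ℝ) :
    sInf {v : EReal | ∃ x ∈ 𝒳,
        ((μ : EReal) ≤ sInf ((fun Q : Measure ℝ => ((∫ t, t ∂Q : ℝ) : EReal)) ''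
          realWassersteinBall 1 (closure (G x '' Ξ))
            (empMeasure fun i => G x (ξh i)) (ε * γG x))) ∧
        v = sSup ((fun Q : Measure ℝ => ((∫ t, t ∂Q : ℝ) : EReal)) ''
          realWassersteinBall 1 (closure (F x '' Ξ))
            (empMeasure fun i => F x (ξh i)) (ε * γF x))} =
    sInf {v : EReal | ∃ x ∈ 𝒳,
        ((μ : EReal) ≤ max (((1 / (N : ℝ)) * ∑ i, G x (ξh i) - ε * γG x : ℝ) : EReal)
          (sInf ((fun ξ => ((G x ξ : ℝ) : EReal)) '' Ξ))) ∧
        v = min (((1 / (N : ℝ)) * ∑ i, F x (ξh i) + ε * γF x : ℝ) : EReal)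
          (sSup ((fun ξ => ((F x ξ : ℝ) : EReal)) '' Ξ))} := by
  refine congrArg sInf (Set.ext fun v => exists_congr fun x => and_congr_right fun hx => ?_)
  rw [sInf_integral_image_realWassersteinBall hN (hGint x hx) (fun i => ⟨ξh i, hξh i, rfl⟩)
      (mul_pos hε (hγG x hx)).le,
    sSup_integral_image_realWassersteinBall hN (hFint x hx) (fun i => ⟨ξh i, hξh i, rfl⟩)
      (mul_pos hε (hγF x hx)).le, Set.image_image, Set.image_image]

/-- Reformulation of the decision-dependent DRO problem with expected-value
objective and expected-value constraint, `p = 1`, interval images (Theorem 2(a)). -/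
theorem statement2 {n m N : ℕ} (hN : 0 < N)
    (Ξ : Set (Fin n → ℝ)) (q : ℝ) (hq : 1 ≤ q)
    (ξh : Fin N → Fin n → ℝ) (hξh : ∀ i, ξh i ∈ Ξ)
    (𝒳 : Set (Fin m → ℝ))
    (F G : (Fin m → ℝ) → (Fin n → ℝ) → ℝ) (γF γG : (Fin m → ℝ) → ℝ)
    (hγF : ∀ x ∈ 𝒳, 0 < γF x) (hγG : ∀ x ∈ 𝒳, 0 < γG x)
    (hF : ∀ x ξ ζ, |F x ξ - F x ζ| ≤ γF x * qnorm q (ξ - ζ))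
    (hG : ∀ x ξ ζ, |G x ξ - G x ζ| ≤ γG x * qnorm q (ξ - ζ))
    (hFint : ∀ x ∈ 𝒳, (F x '' Ξ).OrdConnected)
    (hGint : ∀ x ∈ 𝒳, (G x '' Ξ).OrdConnected)
    (ε : ℝ) (hε : 0 < ε) (μ : ℝ) :
    sInf {v : EReal | ∃ x ∈ 𝒳,
        ((μ : EReal) ≤ sInf ((fun Q : Measure ℝ => ((∫ t, t ∂Q : ℝ) : EReal)) ''
          realWassersteinBall 1 (closure (G x '' Ξ))
            (empMeasure fun i => G x (ξh i)) (ε * γG x))) ∧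
        v = sSup ((fun Q : Measure ℝ => ((∫ t, t ∂Q : ℝ) : EReal)) ''
          realWassersteinBall 1 (closure (F x '' Ξ))
            (empMeasure fun i => F x (ξh i)) (ε * γF x))} =
    sInf {v : EReal | ∃ x ∈ 𝒳,
        ((μ : EReal) ≤ max (((1 / (N : ℝ)) * ∑ i, G x (ξh i) - ε * γG x : ℝ) : EReal)
          (sInf ((fun ξ => ((G x ξ : ℝ) : EReal)) '' Ξ))) ∧
        v = min (((1 / (N : ℝ)) * ∑ i, F x (ξh i) + ε * γF x : ℝ) : EReal)
          (sSup ((fun ξ => ((F x ξ : ℝ) : EReal)) '' Ξ))} :=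
  statement2_general hN Ξ ξh hξh 𝒳 F G γF γG hγF hγG hFint hGint ε hε μ
end

section
/- Let Ξ ⊆ ℝⁿ, p, q ∈ [1,∞), ξ̂₁,…,ξ̂_N ∈ Ξ with empirical distribution P̂_N, let ℙ be a probability measure on Ξ with finite p-th moment, μ ∈ ℝ, and let G : ℝᵐ × ℝⁿ → ℝ be q-Lipschitz in ξ with constant γ_{x,G,q}. Let ε > 0 satisfy W_p(P̂_N, ℙ) ≤ ε, where W_p uses cost ‖·‖_q on Ξ. If x ∈ ℝᵐ satisfies inf{ E_{ζ∼Q}[ζ] : Q a probability measure on ℝ with finite p-th moment and W_p(Q, P̂^{x,G}_N) ≤ ε γ_{x,G,q} } ≥ μ, where this W_p uses cost |·| on ℝ, then E_{ξ∼ℙ}[G(x,ξ)] ≥ μ. -/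
/-!
Push `ℙ` forward along `G x`. The image under `G x × G x` of a coupling of `P̂_N` and `ℙ` is a
coupling of `P̂^{x,G}_N` and `ℙ ∘ (G x)⁻¹`, and the Lipschitz bound multiplies its cost by at most
`γᵖ`; hence `W_p(ℙ ∘ (G x)⁻¹, P̂^{x,G}_N) ≤ γ W_p(P̂_N, ℙ) ≤ γ ε`. The same bound transfers the
finite `p`-th moment, so `ℙ ∘ (G x)⁻¹` belongs to the ambiguity set, and its mean
`E_ℙ[G(x,ξ)]` is therefore at least the infimum over that set, which is at least `μ`.
-/

open MeasureTheory
open scoped ENNReal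

section Wasserstein

variable {α β : Type*} [MeasurableSpace α] [MeasurableSpace β]

def IsCoupling (π : Measure (α × α)) (μ ν : Measure α) : Prop :=
  IsProbabilityMeasure π ∧ π.map Prod.fst = μ ∧ π.map Prod.snd = ν

noncomputable def optimalCost (p : ℝ) (d : α → α → ℝ) (μ ν : Measure α) : ℝ≥0∞ :=
  ⨅ (π : Measure (α × α)) (_ : IsCoupling π μ ν), transportCost p d π

lemma wassersteinDist_eq_optimalCost_rpow (p : ℝ) (d : α → α → ℝ) (μ ν : Measure α) :
    wassersteinDist p d μ ν = optimalCost p d μ ν ^ (1 / p) :=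
  rfl

lemma IsCoupling.swap {π : Measure (α × α)} {μ ν : Measure α} (h : IsCoupling π μ ν) :
    IsCoupling (π.map Prod.swap) ν μ := by
  obtain ⟨hπ, hfst, hsnd⟩ := h
  refine ⟨Measure.isProbabilityMeasure_map measurable_swap.aemeasurable, ?_, ?_⟩
  · rw [Measure.map_map measurable_fst measurable_swap]
    exact hsnd
  · rw [Measure.map_map measurable_snd measurable_swap]
    exact hfst

lemma IsCoupling.map {π : Measure (α × α)} {μ ν : Measure α} (h : IsCoupling π μ ν)
    {f : α → β} (hf : Measurable f) :
    IsCoupling (π.map (Prod.map f f)) (μ.map f) (ν.map f) := by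
  obtain ⟨hπ, hfst, hsnd⟩ := h
  have hff : Measurable (Prod.map f f) := hf.prodMap hf
  refine ⟨Measure.isProbabilityMeasure_map hff.aemeasurable, ?_, ?_⟩
  · rw [Measure.map_map measurable_fst hff, Prod.map_fst', ← hfst,
      Measure.map_map hf measurable_fst]
  · rw [Measure.map_map measurable_snd hff, Prod.map_snd', ← hsnd,
      Measure.map_map hf measurable_snd]

lemma transportCost_map_swap (p : ℝ) (d : α → α → ℝ) (π : Measure (α × α)) :
    transportCost p d (π.map Prod.swap) = transportCost p (fun a b => d b a) π :=
  lintegral_map_equiv _ MeasurableEquiv.prodComm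

lemma optimalCost_comm {p : ℝ} {d : α → α → ℝ} (hd : ∀ a b, d a b = d b a)
    (μ ν : Measure α) : optimalCost p d μ ν = optimalCost p d ν μ := by
  have key : ∀ μ ν : Measure α, optimalCost p d ν μ ≤ optimalCost p d μ ν := by
    intro μ ν
    refine le_iInf₂ fun π hπ => (iInf₂_le (π.map Prod.swap) hπ.swap).trans_eq ?_
    rw [transportCost_map_swap]
    simp only [hd]
  exact le_antisymm (key ν μ) (key μ ν)

lemma wassersteinDist_comm {p : ℝ} {d : α → α → ℝ} (hd : ∀ a b, d a b = d b a)
    (μ ν : Measure α) : wassersteinDist p d μ ν = wassersteinDist p d ν μ := by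
  simp only [wassersteinDist_eq_optimalCost_rpow, optimalCost_comm hd μ ν]

section Lipschitz

variable {p L : ℝ} {dα : α → α → ℝ} {dβ : β → β → ℝ} {f : α → β}

lemma transportCost_map_le (hp : 0 ≤ p) (hL : 0 < L) (hdβ : ∀ a b, 0 ≤ dβ a b)
    (hf : ∀ a b, dβ (f a) (f b) ≤ L * dα a b) (π : Measure (α × α)) :
    transportCost p dβ (π.map (Prod.map f f)) ≤ ENNReal.ofReal L ^ p * transportCost p dα π := by
  refine (lintegral_map_le _ _).trans ?_
  rw [transportCost, ← lintegral_const_mul' _ _ (ENNReal.rpow_ne_top_of_nonneg hp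
    ENNReal.ofReal_ne_top)]
  refine lintegral_mono fun w => ?_
  have hdα : 0 ≤ dα w.1 w.2 := nonneg_of_mul_nonneg_right ((hdβ _ _).trans (hf _ _)) hL
  calc ENNReal.ofReal (dβ (f w.1) (f w.2) ^ p)
      ≤ ENNReal.ofReal ((L * dα w.1 w.2) ^ p) :=
        ENNReal.ofReal_le_ofReal (Real.rpow_le_rpow (hdβ _ _) (hf _ _) hp)
    _ = ENNReal.ofReal L ^ p * ENNReal.ofReal (dα w.1 w.2 ^ p) := by
        rw [Real.mul_rpow hL.le hdα, ENNReal.ofReal_mul (by positivity),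
          ENNReal.ofReal_rpow_of_nonneg hL.le hp]

lemma optimalCost_map_le (hp : 0 ≤ p) (hL : 0 < L) (hdβ : ∀ a b, 0 ≤ dβ a b)
    (hfm : Measurable f) (hf : ∀ a b, dβ (f a) (f b) ≤ L * dα a b) (μ ν : Measure α) :
    optimalCost p dβ (μ.map f) (ν.map f) ≤ ENNReal.ofReal L ^ p * optimalCost p dα μ ν := by
  have hc0 : ENNReal.ofReal L ^ p ≠ 0 := by
    simp [ENNReal.rpow_eq_zero_iff, hL]
  have hctop : ENNReal.ofReal L ^ p ≠ ∞ := ENNReal.rpow_ne_top_of_nonneg hp ENNReal.ofReal_ne_top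
  simp only [optimalCost, ENNReal.mul_iInf_of_ne hc0 hctop]
  exact le_iInf₂ fun π hπ =>
    (iInf₂_le (π.map (Prod.map f f)) (hπ.map hfm)).trans (transportCost_map_le hp hL hdβ hf π)

lemma wassersteinDist_map_le (hp : 0 < p) (hL : 0 < L) (hdβ : ∀ a b, 0 ≤ dβ a b)
    (hfm : Measurable f) (hf : ∀ a b, dβ (f a) (f b) ≤ L * dα a b) (μ ν : Measure α) :
    wassersteinDist p dβ (μ.map f) (ν.map f) ≤ ENNReal.ofReal L * wassersteinDist p dα μ ν := by
  simp only [wassersteinDist_eq_optimalCost_rpow]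
  calc optimalCost p dβ (μ.map f) (ν.map f) ^ (1 / p)
      ≤ (ENNReal.ofReal L ^ p * optimalCost p dα μ ν) ^ (1 / p) := by
        gcongr
        exact optimalCost_map_le hp.le hL hdβ hfm hf μ ν
    _ = ENNReal.ofReal L * optimalCost p dα μ ν ^ (1 / p) := by
        rw [ENNReal.mul_rpow_of_nonneg _ _ (by positivity), ← ENNReal.rpow_mul,
          mul_one_div_cancel hp.ne', ENNReal.rpow_one]

end Lipschitz

end Wasserstein

lemma empMeasure_map {α β : Type*} [MeasurableSpace α] [MeasurableSpace β] {N : ℕ}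
    (ξ : Fin N → α) {f : α → β} (hf : Measurable f) :
    (empMeasure ξ).map f = empMeasure (fun i => f (ξ i)) := by
  simp only [empMeasure, Measure.map_smul, Measure.map_finset_sum hf.aemeasurable,
    Measure.map_dirac' hf]

lemma lintegral_rpow_abs_lt_top_of_abs_sub_le {α : Type*} [MeasurableSpace α] {ν : Measure α}
    [IsFiniteMeasure ν] {p L : ℝ} (hp : 0 ≤ p) (hL : 0 ≤ L) {g r : α → ℝ} (a₀ : α)
    (hr : ∀ a, 0 ≤ r a) (hg : ∀ a, |g a - g a₀| ≤ L * r a)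
    (hmom : ∫⁻ a, ENNReal.ofReal (r a ^ p) ∂ν < ∞) :
    ∫⁻ a, ENNReal.ofReal (|g a| ^ p) ∂ν < ∞ := by
  have hfin : ∀ {x : ℝ≥0∞}, x ≠ ∞ → x ^ p ≠ ∞ := ENNReal.rpow_ne_top_of_nonneg hp
  set c := ENNReal.ofReal |g a₀| ^ p
  have hpoint : ∀ a, ENNReal.ofReal (|g a| ^ p) ≤
      2 ^ p * (c + ENNReal.ofReal L ^ p * ENNReal.ofReal (r a ^ p)) := by
    intro a
    have habs : |g a| ≤ |g a₀| + L * r a := by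
      linarith [abs_sub_abs_le_abs_sub (g a) (g a₀), hg a]
    calc ENNReal.ofReal (|g a| ^ p) = ENNReal.ofReal |g a| ^ p :=
          (ENNReal.ofReal_rpow_of_nonneg (abs_nonneg _) hp).symm
      _ ≤ (ENNReal.ofReal |g a₀| + ENNReal.ofReal L * ENNReal.ofReal (r a)) ^ p := by
          rw [← ENNReal.ofReal_mul hL]
          gcongr
          exact (ENNReal.ofReal_le_ofReal habs).trans ENNReal.ofReal_add_le
      _ ≤ 2 ^ p * (c + (ENNReal.ofReal L * ENNReal.ofReal (r a)) ^ p) :=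
          ENNReal.add_rpow_le_two_rpow_mul_rpow_add_rpow _ _ hp
      _ = 2 ^ p * (c + ENNReal.ofReal L ^ p * ENNReal.ofReal (r a ^ p)) := by
          rw [ENNReal.mul_rpow_of_nonneg _ _ hp, ENNReal.ofReal_rpow_of_nonneg (hr a) hp]
  calc ∫⁻ a, ENNReal.ofReal (|g a| ^ p) ∂ν
      ≤ ∫⁻ a, 2 ^ p * (c + ENNReal.ofReal L ^ p * ENNReal.ofReal (r a ^ p)) ∂ν :=
        lintegral_mono hpoint
    _ = 2 ^ p * (c * ν Set.univ + ENNReal.ofReal L ^ p * ∫⁻ a, ENNReal.ofReal (r a ^ p) ∂ν) := by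
        rw [lintegral_const_mul' _ _ (hfin ENNReal.ofNat_ne_top),
          lintegral_add_left measurable_const, lintegral_const,
          lintegral_const_mul' _ _ (hfin ENNReal.ofReal_ne_top)]
    _ < ∞ := by
        have : c ≠ ∞ := hfin ENNReal.ofReal_ne_top
        have : ENNReal.ofReal L ^ p ≠ ∞ := hfin ENNReal.ofReal_ne_top
        have : (2 : ℝ≥0∞) ^ p ≠ ∞ := hfin ENNReal.ofNat_ne_top
        finiteness

lemma qnorm_nonneg (q : ℝ) {n : ℕ} (v : Fin n → ℝ) : 0 ≤ qnorm q v := by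
  unfold qnorm
  positivity

lemma qnorm_zero {q : ℝ} (hq : 0 < q) {n : ℕ} : qnorm q (0 : Fin n → ℝ) = 0 := by
  simp [qnorm, Real.zero_rpow hq.ne', hq.ne']

lemma continuous_qnorm {q : ℝ} (hq : 0 < q) {n : ℕ} : Continuous (qnorm q (n := n)) := by
  unfold qnorm
  exact (continuous_finsetSum _ fun i _ =>
    (continuous_apply i).abs.rpow_const fun _ => Or.inr hq.le).rpow_const
    fun _ => Or.inr (by positivity)

lemma continuous_of_abs_sub_le_mul_qnorm {q L : ℝ} (hq : 0 < q) {n : ℕ}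
    {g : (Fin n → ℝ) → ℝ} (hg : ∀ ξ ζ, |g ξ - g ζ| ≤ L * qnorm q (ξ - ζ)) : Continuous g := by
  refine continuous_iff_continuousAt.2 fun ζ => tendsto_iff_dist_tendsto_zero.2 ?_
  have hbound : Continuous fun ξ => L * qnorm q (ξ - ζ) := by
    have := continuous_qnorm hq (n := n)
    fun_prop
  refine squeeze_zero (fun _ => dist_nonneg) (fun ξ => hg ξ ζ) ?_
  simpa [qnorm_zero hq] using hbound.tendsto ζ

theorem statement9_general {n m N : ℕ}
    (Ξ : Set (Fin n → ℝ)) (p q : ℝ) (hp : 1 ≤ p) (hq : 1 ≤ q)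
    (ξh : Fin N → Fin n → ℝ)
    (ℙtrue : Measure (Fin n → ℝ)) (hℙ : IsProbabilityMeasure ℙtrue)
    (hℙmom : ∃ ζ₀ ∈ Ξ, ∫⁻ ξ, ENNReal.ofReal (qnorm q (ξ - ζ₀) ^ p) ∂ℙtrue < ⊤)
    (μ : ℝ)
    (G : (Fin m → ℝ) → (Fin n → ℝ) → ℝ) (γG : (Fin m → ℝ) → ℝ)
    (hγG : ∀ x, 0 < γG x)
    (hG : ∀ x ξ ζ, |G x ξ - G x ζ| ≤ γG x * qnorm q (ξ - ζ))
    (ε : ℝ)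
    (hball : wassersteinDist p (fun a b => qnorm q (a - b)) (empMeasure ξh) ℙtrue ≤
      ENNReal.ofReal ε)
    (x : Fin m → ℝ)
    (hx : (μ : EReal) ≤ sInf ((fun Q : Measure ℝ => ((∫ t, t ∂Q : ℝ) : EReal)) ''
      realWassersteinBall p Set.univ (empMeasure fun i => G x (ξh i)) (ε * γG x))) :
    μ ≤ ∫ ξ, G x ξ ∂ℙtrue := by
  have hp0 : 0 < p := by linarith
  have hGx : Measurable (G x) :=
    (continuous_of_abs_sub_le_mul_qnorm (by linarith) (hG x)).measurable
  set Q := ℙtrue.map (G x)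
  have hQmom : ∫⁻ t, ENNReal.ofReal (|t| ^ p) ∂Q < ∞ := by
    obtain ⟨ζ₀, -, hmom⟩ := hℙmom
    exact (lintegral_map_le _ _).trans_lt <| lintegral_rpow_abs_lt_top_of_abs_sub_le hp0.le
      (hγG x).le ζ₀ (fun _ => qnorm_nonneg q _) (fun ξ => hG x ξ ζ₀) hmom
  have hQdist : wassersteinDist p (fun a b => |a - b|) Q (empMeasure fun i => G x (ξh i)) ≤
      ENNReal.ofReal (ε * γG x) :=
    calc wassersteinDist p (fun a b => |a - b|) Q (empMeasure fun i => G x (ξh i))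
        = wassersteinDist p (fun a b => |a - b|) ((empMeasure ξh).map (G x)) Q := by
          rw [wassersteinDist_comm abs_sub_comm, empMeasure_map ξh hGx]
      _ ≤ ENNReal.ofReal (γG x) * ENNReal.ofReal ε :=
          (wassersteinDist_map_le hp0 (hγG x) (fun _ _ => abs_nonneg _) hGx (hG x) _ _).trans
            (by gcongr)
      _ = ENNReal.ofReal (ε * γG x) := by rw [ENNReal.ofReal_mul' (hγG x).le, mul_comm]
  have hQ : Q ∈ realWassersteinBall p Set.univ (empMeasure fun i => G x (ξh i)) (ε * γG x) :=
    ⟨Measure.isProbabilityMeasure_map hGx.aemeasurable, by simp, hQmom, hQdist⟩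
  calc μ ≤ ∫ t, t ∂Q := EReal.coe_le_coe_iff.mp (hx.trans (sInf_le ⟨Q, hQ, rfl⟩))
    _ = ∫ ξ, G x ξ ∂ℙtrue := integral_map hGx.aemeasurable aestronglyMeasurable_id

/-- If the true distribution lies in the `ε`-Wasserstein ball around the empirical
distribution, any decision feasible for the decision-dependent robust constraint
satisfies the true expected-value constraint (Lemma on confidence). -/
theorem statement9 {n m N : ℕ} (hN : 0 < N)
    (Ξ : Set (Fin n → ℝ)) (p q : ℝ) (hp : 1 ≤ p) (hq : 1 ≤ q)
    (ξh : Fin N → Fin n → ℝ) (hξh : ∀ i, ξh i ∈ Ξ)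
    (ℙtrue : Measure (Fin n → ℝ)) (hℙ : IsProbabilityMeasure ℙtrue)
    (hℙΞ : ℙtrue Ξᶜ = 0)
    (hℙmom : ∃ ζ₀ ∈ Ξ, ∫⁻ ξ, ENNReal.ofReal (qnorm q (ξ - ζ₀) ^ p) ∂ℙtrue < ⊤)
    (μ : ℝ)
    (G : (Fin m → ℝ) → (Fin n → ℝ) → ℝ) (γG : (Fin m → ℝ) → ℝ)
    (hγG : ∀ x, 0 < γG x)
    (hG : ∀ x ξ ζ, |G x ξ - G x ζ| ≤ γG x * qnorm q (ξ - ζ))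
    (ε : ℝ) (hε : 0 < ε)
    (hball : wassersteinDist p (fun a b => qnorm q (a - b)) (empMeasure ξh) ℙtrue ≤
      ENNReal.ofReal ε)
    (x : Fin m → ℝ)
    (hx : (μ : EReal) ≤ sInf ((fun Q : Measure ℝ => ((∫ t, t ∂Q : ℝ) : EReal)) ''
      realWassersteinBall p Set.univ (empMeasure fun i => G x (ξh i)) (ε * γG x))) :
    μ ≤ ∫ ξ, G x ξ ∂ℙtrue :=
  statement9_general Ξ p q hp hq ξh ℙtrue hℙ hℙmom μ G γG hγG hG ε hball x hx
end
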